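/- For every odd integer N ≥ 1, the ℚ-vector space FSh₂(N) is the internal direct sum of its polynomial part FSh₂(N)^{pol} := FSh₂(N) ∩ ℚ[X,Y] and the one-dimensional subspace spanned by P̃(X,Y) = X^{N−1}/Y − Y^{N−1}/X − (X^{N−1} − Y^{N−1})/(X+Y). In particular, dim_ℚ FSh₂(N) = dim_ℚ FSh₂(N)^{pol} + 1. -/

import Mathlib

noncomputable section

open MvPolynomial

/-- The polynomial ring `ℚ[X,Y]`, with `X = X 0` and `Y = X 1`. -/
abbrev R2 : Type := MvPolynomial (Fin 2) ℚ

/-- The field of rational functions `ℚ(X,Y)`. -/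
abbrev K2 : Type := FractionRing R2

/-- The substitution `(X, Y) ↦ (X + Y, -Y)` on polynomials. -/
def fayA : R2 →ₐ[ℚ] R2 := aeval ![X 0 + X 1, -X 1]

/-- The substitution `(X, Y) ↦ (-X - Y, X)` on polynomials. -/
def rotA : R2 →ₐ[ℚ] R2 := aeval ![-X 0 - X 1, X 0]

/-- The substitution `(X, Y) ↦ (Y, X)` on polynomials. -/
def swapA : R2 →ₐ[ℚ] R2 := aeval ![X 1, X 0]

lemma fayA_invol : fayA.comp fayA = AlgHom.id ℚ R2 := by
  apply algHom_ext
  intro i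
  fin_cases i <;> simp [fayA]

lemma rotA_cube : rotA.comp (rotA.comp rotA) = AlgHom.id ℚ R2 := by
  apply algHom_ext
  intro i
  fin_cases i <;> simp [rotA]

lemma swapA_invol : swapA.comp swapA = AlgHom.id ℚ R2 := by
  apply algHom_ext
  intro i
  fin_cases i <;> simp [swapA]

lemma fayA_inj : Function.Injective fayA :=
  Function.LeftInverse.injective (g := fayA) fun x => by
    simpa using DFunLike.congr_fun fayA_invol x

lemma rotA_inj : Function.Injective rotA :=
  Function.LeftInverse.injective (g := rotA.comp rotA) fun x => by
    simpa using DFunLike.congr_fun rotA_cube x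

lemma swapA_inj : Function.Injective swapA :=
  Function.LeftInverse.injective (g := swapA) fun x => by
    simpa using DFunLike.congr_fun swapA_invol x

/-- Lift an injective substitution on `ℚ[X,Y]` to the fraction field `ℚ(X,Y)`. -/
def liftK (φ : R2 →ₐ[ℚ] R2) (hφ : Function.Injective φ) : K2 →+* K2 :=
  IsFractionRing.lift (g := (algebraMap R2 K2).comp φ.toRingHom)
    (fun _ _ h => hφ (IsFractionRing.injective R2 K2 h))

/-- `P(X,Y) ↦ P(X+Y, -Y)` as a `ℚ`-linear endomorphism of `ℚ(X,Y)`. -/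
def fayL : K2 →ₗ[ℚ] K2 := (liftK fayA fayA_inj).toAddMonoidHom.toRatLinearMap

/-- `P(X,Y) ↦ P(-X-Y, X)` as a `ℚ`-linear endomorphism of `ℚ(X,Y)`. -/
def rotL : K2 →ₗ[ℚ] K2 := (liftK rotA rotA_inj).toAddMonoidHom.toRatLinearMap

/-- `P(X,Y) ↦ P(Y, X)` as a `ℚ`-linear endomorphism of `ℚ(X,Y)`. -/
def swapL : K2 →ₗ[ℚ] K2 := (liftK swapA swapA_inj).toAddMonoidHom.toRatLinearMap

/-- The inclusion `ℚ[X,Y] → ℚ(X,Y)` as a `ℚ`-linear map. -/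
def algL : R2 →ₗ[ℚ] K2 := (IsScalarTower.toAlgHom ℚ R2 K2).toRingHom.toAddMonoidHom.toRatLinearMap

/-- The element `X·Y ∈ ℚ(X,Y)`. -/
def xyK : K2 := algebraMap R2 K2 (X 0 * X 1)

/-- The length-two Fay-shuffle space `FSh₂(N)`: rational functions `P(X,Y)`,
homogeneous of degree `N - 2` with at most simple poles along `X = 0` and `Y = 0`
and no other poles (equivalently, `X·Y·P` is a homogeneous polynomial of degree `N`),
satisfying the Fay relation `P(X,Y) + P(X+Y,-Y) + P(-X-Y,X) = 0` and the shuffle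
relation `P(X,Y) + P(Y,X) = 0`. -/
def FSh (N : ℕ) : Submodule ℚ K2 :=
  (Submodule.map algL (homogeneousSubmodule (Fin 2) ℚ N)).comap (LinearMap.mulLeft ℚ xyK)
    ⊓ LinearMap.ker (LinearMap.id + fayL + rotL)
    ⊓ LinearMap.ker (LinearMap.id + swapL)


/-- The element `P̃(X,Y) = X^(N-1)/Y - Y^(N-1)/X - (X^(N-1) - Y^(N-1))/(X+Y)` of `ℚ(X,Y)`. -/
def Ptil (N : ℕ) : K2 :=
  (algebraMap R2 K2 (X 0)) ^ (N - 1) / algebraMap R2 K2 (X 1)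
    - (algebraMap R2 K2 (X 1)) ^ (N - 1) / algebraMap R2 K2 (X 0)
    - ((algebraMap R2 K2 (X 0)) ^ (N - 1) - (algebraMap R2 K2 (X 1)) ^ (N - 1))
        / (algebraMap R2 K2 (X 0) + algebraMap R2 K2 (X 1))

/-- The polynomial part of the Fay-shuffle space: `FSh₂(N)^pol = FSh₂(N) ∩ ℚ[X,Y]`. -/
def FShPol (N : ℕ) : Submodule ℚ K2 := FSh N ⊓ LinearMap.range algL


/-!
Write `N = n + 1` with `n` even. Multiplying by `X·Y` identifies `FSh₂(N)` with a space of
homogeneous polynomials `Q` of degree `N` that are antisymmetric under `X ↔ Y`, and `P = Q/(X·Y)` is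
a polynomial exactly when the coefficients of `X^N` and `Y^N` in `Q` vanish; by antisymmetry this is
the single condition that the `X^N`-coefficient vanishes. Since `n` is even, `X + Y` divides
`X^n - Y^n`, so `X·Y·P̃ = X^N - Y^N - X·Y·(X^n - Y^n)/(X + Y)` is such a `Q` with `X^N`-coefficient
`1`. Hence subtracting the right multiple of `P̃` from any element of `FSh₂(N)` leaves a polynomial,
and no nonzero multiple of `P̃` is a polynomial. The Fay relation for `P̃` is an identity of
rational functions, again using that `n` is even.
-/

open Finset

section TwoVariables

variable {R : Type*}

lemma MvPolynomial.coeff_single_zero_X_mul_X_mul [CommSemiring R] (N : ℕ)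
    (q : MvPolynomial (Fin 2) R) : coeff (Finsupp.single 0 N) (X 0 * X 1 * q) = 0 := by
  classical
  rw [mul_comm (X 0), mul_assoc, coeff_X_mul']
  simp

lemma MvPolynomial.X_mul_X_dvd_of_isHomogeneous [CommSemiring R] {q : MvPolynomial (Fin 2) R}
    {N : ℕ} (hq : q.IsHomogeneous N) (h0 : coeff (Finsupp.single 0 N) q = 0)
    (h1 : coeff (Finsupp.single 1 N) q = 0) : X 0 * X 1 ∣ q := by
  rw [← q.support_sum_monomial_coeff]
  refine Finset.dvd_sum fun d hmem => ?_
  have hd := mem_support_iff.mp hmem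
  have hdeg : d 0 + d 1 = N := by
    by_contra h
    exact hd (hq.coeff_eq_zero (by rwa [Finsupp.degree_eq_sum, Fin.sum_univ_two]))
  have hd0 : d 0 ≠ 0 := fun h => hd <| by
    convert h1; ext i; fin_cases i <;> simp [h, ← hdeg]
  have hd1 : d 1 ≠ 0 := fun h => hd <| by
    convert h0; ext i; fin_cases i <;> simp [h, ← hdeg]
  rw [X, X, monomial_mul, monomial_dvd_monomial]
  refine ⟨Or.inr fun i => ?_, by simp⟩
  fin_cases i <;> simp <;> omega

lemma MvPolynomial.coeff_single_one_eq_neg_of_rename_swap [CommRing R]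
    {q : MvPolynomial (Fin 2) R} (hq : rename (Equiv.swap 0 1) q = -q) (N : ℕ) :
    coeff (Finsupp.single 1 N) q = -coeff (Finsupp.single 0 N) q := by
  have := coeff_rename_mapDomain _ (Equiv.swap (0 : Fin 2) 1).injective q (Finsupp.single 0 N)
  rwa [Finsupp.mapDomain_single, Equiv.swap_apply_left, hq, coeff_neg, neg_eq_iff_eq_neg] at this

lemma MvPolynomial.IsHomogeneous.geom_sum₂ [CommSemiring R] {σ : Type*}
    {p q : MvPolynomial σ R} (hp : p.IsHomogeneous 1) (hq : q.IsHomogeneous 1) (n : ℕ) :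
    (∑ i ∈ range n, p ^ i * q ^ (n - 1 - i)).IsHomogeneous (n - 1) :=
  IsHomogeneous.sum _ _ _ fun i hi => by
    have hi : i ≤ n - 1 := by have := mem_range.mp hi; omega
    simpa [Nat.add_sub_cancel' hi] using (hp.pow i).mul (hq.pow (n - 1 - i))

end TwoVariables

section Field

variable {F G : Type*} [Field F] [Field G]

def ptil (n : ℕ) (x y : F) : F := x ^ n / y - y ^ n / x - (x ^ n - y ^ n) / (x + y)

lemma map_ptil (f : F →+* G) (n : ℕ) (x y : F) : f (ptil n x y) = ptil n (f x) (f y) := by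
  simp [ptil]

lemma ptil_swap (n : ℕ) (x y : F) : ptil n y x = -ptil n x y := by
  simp only [ptil, add_comm y x]
  ring

lemma ptil_fay {n : ℕ} (hn : Even n) {x y : F} (hx : x ≠ 0) (hy : y ≠ 0) (hxy : x + y ≠ 0) :
    ptil n x y + ptil n (x + y) (-y) + ptil n (-x - y) x = 0 := by
  simp only [ptil, add_neg_cancel_right, show -x - y = -(x + y) by ring,
    show -(x + y) + x = -y by ring, hn.neg_pow, div_neg]
  field_simp
  ring

end Field

section RationalFunctions

abbrev xK : K2 := algebraMap R2 K2 (X 0)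

abbrev yK : K2 := algebraMap R2 K2 (X 1)

lemma xK_ne_zero : xK ≠ 0 := by
  simp [xK, X_ne_zero]

lemma yK_ne_zero : yK ≠ 0 := by
  simp [yK, X_ne_zero]

lemma xK_add_yK_ne_zero : xK + yK ≠ 0 := by
  rw [xK, yK, ← map_add, Ne, IsFractionRing.to_map_eq_zero_iff]
  intro h
  simpa using congr_arg (eval fun _ => (1 : ℚ)) h

lemma xyK_eq : xyK = xK * yK := map_mul _ _ _

lemma xyK_ne_zero : xyK ≠ 0 := xyK_eq ▸ mul_ne_zero xK_ne_zero yK_ne_zero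

lemma Ptil_eq_ptil (N : ℕ) : Ptil N = ptil (N - 1) xK yK := rfl

lemma algL_apply (r : R2) : algL r = algebraMap R2 K2 r := rfl

lemma algL_injective : Function.Injective algL := IsFractionRing.injective R2 K2

lemma algL_X_mul_X_mul (q : R2) : algL (X 0 * X 1 * q) = xyK * algL q :=
  map_mul (algebraMap R2 K2) _ _

lemma liftK_algebraMap (φ : R2 →ₐ[ℚ] R2) (hφ : Function.Injective φ) (r : R2) :
    liftK φ hφ (algebraMap R2 K2 r) = algebraMap R2 K2 (φ r) :=
  IsFractionRing.lift_algebraMap _ _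

lemma fayL_apply (z : K2) : fayL z = liftK fayA fayA_inj z := rfl

lemma rotL_apply (z : K2) : rotL z = liftK rotA rotA_inj z := rfl

lemma swapL_apply (z : K2) : swapL z = liftK swapA swapA_inj z := rfl

lemma fayL_ptil (n : ℕ) : fayL (ptil n xK yK) = ptil n (xK + yK) (-yK) := by
  simp [fayL_apply, map_ptil, xK, yK, liftK_algebraMap, fayA]

lemma rotL_ptil (n : ℕ) : rotL (ptil n xK yK) = ptil n (-xK - yK) xK := by
  simp [rotL_apply, map_ptil, xK, yK, liftK_algebraMap, rotA]

lemma swapL_ptil (n : ℕ) : swapL (ptil n xK yK) = -ptil n xK yK := by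
  rw [swapL_apply, map_ptil, ← ptil_swap]
  simp [xK, yK, liftK_algebraMap, swapA]

lemma swapL_xyK : swapL xyK = xyK := by
  simp [swapL_apply, xyK, liftK_algebraMap, swapA, mul_comm]

end RationalFunctions

section Numerator

def geomSumXY (n : ℕ) : R2 := ∑ i ∈ range n, X 0 ^ i * (-X 1) ^ (n - 1 - i)

lemma geomSumXY_mul (n : ℕ) : geomSumXY n * (X 0 + X 1) = X 0 ^ n - (-X 1) ^ n := by
  have := geom_sum₂_mul (X 0 : R2) (-X 1) n
  rwa [sub_neg_eq_add] at this

lemma algL_geomSumXY {n : ℕ} (hn : Even n) :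
    algL (geomSumXY n) = (xK ^ n - yK ^ n) / (xK + yK) := by
  rw [eq_div_iff xK_add_yK_ne_zero, ← hn.neg_pow yK, algL_apply]
  simpa only [map_mul, map_add, map_sub, map_pow, map_neg]
    using congr_arg (algebraMap R2 K2) (geomSumXY_mul n)

lemma isHomogeneous_X_mul_X_mul_geomSumXY (n : ℕ) :
    (X 0 * X 1 * geomSumXY n).IsHomogeneous (n + 1) := by
  rcases n with _ | n
  · simpa [geomSumXY] using isHomogeneous_zero (Fin 2) ℚ 1
  · have h0 := isHomogeneous_X ℚ (0 : Fin 2)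
    have h1 := isHomogeneous_X ℚ (1 : Fin 2)
    have := (h0.mul h1).mul (h0.geom_sum₂ h1.neg (n + 1))
    rwa [show 1 + 1 + (n + 1 - 1) = n + 1 + 1 by omega] at this

def PtilNum (N : ℕ) : R2 := X 0 ^ N - X 1 ^ N - X 0 * X 1 * geomSumXY (N - 1)

lemma isHomogeneous_PtilNum {N : ℕ} (hN : N ≠ 0) : (PtilNum N).IsHomogeneous N := by
  obtain ⟨n, rfl⟩ := Nat.exists_eq_succ_of_ne_zero hN
  exact ((isHomogeneous_X_pow _ _).sub (isHomogeneous_X_pow _ _)).sub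
    (isHomogeneous_X_mul_X_mul_geomSumXY n)

lemma coeff_PtilNum {N : ℕ} (hN : N ≠ 0) : coeff (Finsupp.single 0 N) (PtilNum N) = 1 := by
  simp [PtilNum, coeff_X_pow, coeff_single_zero_X_mul_X_mul, Finsupp.single_eq_single_iff, hN]

lemma xyK_mul_Ptil {N : ℕ} (hN : Odd N) : xyK * Ptil N = algL (PtilNum N) := by
  obtain ⟨k, rfl⟩ := hN
  rw [PtilNum, Ptil_eq_ptil, Nat.add_sub_cancel, map_sub, map_sub, algL_X_mul_X_mul,
    algL_geomSumXY (even_two_mul k)]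
  simp only [xyK_eq, ptil, algL_apply, map_pow]
  field_simp [xK_ne_zero, yK_ne_zero, xK_add_yK_ne_zero]
  ring

end Numerator

section FayShuffle

lemma mem_FSh_iff {N : ℕ} {P : K2} :
    P ∈ FSh N ↔ (∃ Q : R2, Q.IsHomogeneous N ∧ algL Q = xyK * P) ∧
      P + fayL P + rotL P = 0 ∧ P + swapL P = 0 := by
  simp [FSh, and_assoc]

instance (N : ℕ) : FiniteDimensional ℚ (FSh N) := by
  have : FiniteDimensional ℚ (homogeneousSubmodule (Fin 2) ℚ N) :=
    Module.Finite.iff_fg.mpr (homogeneousSubmodule_fg (Fin 2) ℚ N)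
  refine Submodule.finiteDimensional_of_le
    (S₂ := ((homogeneousSubmodule (Fin 2) ℚ N).map algL).map (LinearMap.mulLeft ℚ xyK⁻¹)) ?_
  intro P hP
  obtain ⟨⟨Q, hQ, hQP⟩, -⟩ := mem_FSh_iff.mp hP
  exact ⟨xyK * P, ⟨Q, hQ, hQP⟩, by simp [xyK_ne_zero]⟩

instance (N : ℕ) : FiniteDimensional ℚ (FShPol N) :=
  Submodule.finiteDimensional_of_le inf_le_left

lemma Ptil_mem_FSh {N : ℕ} (hN : Odd N) : Ptil N ∈ FSh N := by
  refine mem_FSh_iff.mpr ⟨⟨PtilNum N, isHomogeneous_PtilNum hN.pos.ne', (xyK_mul_Ptil hN).symm⟩,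
    ?_, by rw [Ptil_eq_ptil, swapL_ptil, add_neg_cancel]⟩
  rw [Ptil_eq_ptil, fayL_ptil, rotL_ptil]
  obtain ⟨k, rfl⟩ := hN
  exact ptil_fay (by simp) xK_ne_zero yK_ne_zero xK_add_yK_ne_zero

lemma Ptil_ne_zero {N : ℕ} (hN : Odd N) : Ptil N ≠ 0 := by
  intro h
  have : PtilNum N = 0 := algL_injective (by rw [← xyK_mul_Ptil hN, h, mul_zero, map_zero])
  simpa [this] using coeff_PtilNum hN.pos.ne'

lemma swapA_eq_rename : swapA = rename (Equiv.swap (0 : Fin 2) 1) := by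
  apply algHom_ext
  intro i
  fin_cases i <;> simp [swapA]

lemma swapA_eq_neg_of_algL_eq {P : K2} {Q : R2} (hP : P + swapL P = 0) (hQ : algL Q = xyK * P) :
    swapA Q = -Q := by
  apply algL_injective
  calc algL (swapA Q) = swapL (algL Q) := (liftK_algebraMap swapA swapA_inj Q).symm
    _ = swapL xyK * swapL P := by rw [hQ, swapL_apply, map_mul]; rfl
    _ = algL (-Q) := by rw [swapL_xyK, eq_neg_of_add_eq_zero_right hP, mul_neg, ← hQ, map_neg]

lemma mem_range_algL_of_mem_FSh {N : ℕ} {P : K2} {Q : R2} (hP : P ∈ FSh N)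
    (hQ : algL Q = xyK * P) (h0 : coeff (Finsupp.single 0 N) Q = 0) :
    P ∈ LinearMap.range algL := by
  obtain ⟨⟨Q', hQ'hom, hQ'⟩, -, hswap⟩ := mem_FSh_iff.mp hP
  obtain rfl : Q' = Q := algL_injective (hQ'.trans hQ.symm)
  have h1 : coeff (Finsupp.single 1 N) Q' = 0 := by
    rw [coeff_single_one_eq_neg_of_rename_swap (swapA_eq_rename ▸ swapA_eq_neg_of_algL_eq hswap hQ),
      h0, neg_zero]
  obtain ⟨S, rfl⟩ := X_mul_X_dvd_of_isHomogeneous hQ'hom h0 h1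
  exact ⟨S, mul_left_cancel₀ xyK_ne_zero (by rw [← algL_X_mul_X_mul, hQ])⟩

lemma exists_sub_smul_Ptil_mem_FShPol {N : ℕ} (hN : Odd N) {P : K2} (hP : P ∈ FSh N) :
    ∃ c : ℚ, P - c • Ptil N ∈ FShPol N := by
  obtain ⟨⟨Q, -, hQ⟩, -⟩ := mem_FSh_iff.mp hP
  set c := coeff (Finsupp.single 0 N) Q
  have hR : P - c • Ptil N ∈ FSh N := sub_mem hP (Submodule.smul_mem _ c (Ptil_mem_FSh hN))
  refine ⟨c, hR, mem_range_algL_of_mem_FSh hR (Q := Q - c • PtilNum N) ?_ ?_⟩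
  · rw [map_sub, map_smul, hQ, ← xyK_mul_Ptil hN, mul_sub, mul_smul_comm]
  · simp [coeff_PtilNum hN.pos.ne', c]

lemma FSh_eq_FShPol_sup_span_Ptil {N : ℕ} (hN : Odd N) :
    FSh N = FShPol N ⊔ Submodule.span ℚ {Ptil N} := by
  refine le_antisymm (fun P hP => ?_) (sup_le inf_le_left ?_)
  · obtain ⟨c, hc⟩ := exists_sub_smul_Ptil_mem_FShPol hN hP
    rw [← sub_add_cancel P (c • Ptil N)]
    exact Submodule.add_mem_sup hc (Submodule.smul_mem _ c (Submodule.mem_span_singleton_self _))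
  · rw [Submodule.span_le, Set.singleton_subset_iff]
    exact Ptil_mem_FSh hN

lemma FShPol_inf_span_Ptil {N : ℕ} (hN : Odd N) :
    FShPol N ⊓ Submodule.span ℚ {Ptil N} = ⊥ := by
  refine (Submodule.eq_bot_iff _).mpr ?_
  rintro z ⟨⟨-, q, rfl⟩, hz⟩
  obtain ⟨a, ha⟩ := Submodule.mem_span_singleton.mp hz
  have key : X 0 * X 1 * q = a • PtilNum N := algL_injective <| by
    rw [algL_X_mul_X_mul, map_smul, ← xyK_mul_Ptil hN, ← ha, mul_smul_comm]
  have ha0 : a = 0 := by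
    simpa [coeff_single_zero_X_mul_X_mul, coeff_PtilNum hN.pos.ne'] using
      (congr_arg (coeff (Finsupp.single 0 N)) key).symm
  rw [← ha, ha0]
  exact zero_smul ℚ (Ptil N)

end FayShuffle

theorem FSh_decomposition_general (N : ℕ) (hN : Odd N) :
    FSh N = FShPol N ⊔ Submodule.span ℚ {Ptil N} ∧
    FShPol N ⊓ Submodule.span ℚ {Ptil N} = ⊥ ∧
    Module.finrank ℚ ↥(FSh N) = Module.finrank ℚ ↥(FShPol N) + 1 := by
  have hsup := FSh_eq_FShPol_sup_span_Ptil hN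
  have hinf := FShPol_inf_span_Ptil hN
  refine ⟨hsup, hinf, ?_⟩
  have := Submodule.finrank_sup_add_finrank_inf_eq (FShPol N) (Submodule.span ℚ {Ptil N})
  rw [hinf, finrank_bot, finrank_span_singleton (Ptil_ne_zero hN), ← hsup] at this
  omega

/-- For every odd `N ≥ 1`, the Fay-shuffle space `FSh₂(N)` is the internal direct sum
of its polynomial part and the line spanned by `P̃`; in particular
`dim FSh₂(N) = dim FSh₂(N)^pol + 1`. -/
theorem FSh_decomposition (N : ℕ) (hN : Odd N) (h1 : 1 ≤ N) :
    FSh N = FShPol N ⊔ Submodule.span ℚ {Ptil N} ∧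
    FShPol N ⊓ Submodule.span ℚ {Ptil N} = ⊥ ∧
    Module.finrank ℚ ↥(FSh N) = Module.finrank ℚ ↥(FShPol N) + 1 :=
  FSh_decomposition_general N hN

end
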